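/- arXiv:1911.02173 — 2 statements merged into one kernel-verified Lean document; each statement's English description precedes it below -/
import Mathlib

section
/- Knight's identity: for all u, v ∈ ℝ and τ ∈ (0,1), ρ_τ(u − v) − ρ_τ(u) = −v·(τ − 1{u ≤ 0}) + ∫₀^v (1{u ≤ s} − 1{u ≤ 0}) ds. -/
/-- The quantile check function ρ_τ(u) = (τ − 1{u ≤ 0})·u. -/
noncomputable def check (τ u : ℝ) : ℝ := (τ - if u ≤ 0 then 1 else 0) * u

/-! `s ↦ max s u` is a right antiderivative of `1{u ≤ s}` at every point, the kink at `u`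
included, so `∫₀^v 1{u ≤ s} ds = max v u - max 0 u` by the fundamental theorem of calculus.
With this the identity is linear arithmetic in each of the cases given by the signs of `u`
and `u - v`. -/

open Set

lemma monotone_ite_le (u : ℝ) : Monotone fun s : ℝ => if u ≤ s then (1 : ℝ) else 0 := by
  intro x y hxy
  dsimp only
  split_ifs with hx hy hy
  exacts [le_rfl, absurd (hx.trans hxy) hy, zero_le_one, le_rfl]

lemma hasDerivWithinAt_max_const_Ioi (u s : ℝ) :
    HasDerivWithinAt (fun y => max y u) (if u ≤ s then 1 else 0) (Ioi s) s := by
  split_ifs with hus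
  · refine (hasDerivWithinAt_id s _).congr (fun y hy => ?_) (max_eq_left hus)
    exact max_eq_left (hus.trans (le_of_lt hy))
  · have hsu : s < u := not_le.mp hus
    refine (hasDerivAt_const s u).hasDerivWithinAt.congr_of_eventuallyEq ?_ (max_eq_right_of_lt hsu)
    filter_upwards [nhdsWithin_le_nhds (Iio_mem_nhds hsu)] with y hy
    exact max_eq_right_of_lt hy

lemma integral_ite_le (u a b : ℝ) :
    ∫ s in a..b, (if u ≤ s then (1 : ℝ) else 0) = max b u - max a u :=
  intervalIntegral.integral_eq_sub_of_hasDeriv_right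
    ((continuous_id.max continuous_const).continuousOn)
    (fun s _ => hasDerivWithinAt_max_const_Ioi u s) (monotone_ite_le u).intervalIntegrable

theorem knight_identity_general (τ : ℝ) (u v : ℝ) :
    check τ (u - v) - check τ u =
      -v * (τ - if u ≤ 0 then 1 else 0) +
        ∫ s in (0 : ℝ)..v, ((if u ≤ s then (1 : ℝ) else 0) - (if u ≤ 0 then (1 : ℝ) else 0)) := by
  rw [intervalIntegral.integral_sub (monotone_ite_le u).intervalIntegrable intervalIntegrable_const,
    intervalIntegral.integral_const, integral_ite_le, check, check, smul_eq_mul]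
  rcases le_total v u with hv | hv <;> rcases le_total 0 u with hu | hu <;>
    simp only [max_eq_left, max_eq_right, hv, hu] <;> split_ifs <;> linarith

/-- Knight's identity. -/
theorem knight_identity (τ : ℝ) (hτ : τ ∈ Set.Ioo (0 : ℝ) 1) (u v : ℝ) :
    check τ (u - v) - check τ u =
      -v * (τ - if u ≤ 0 then 1 else 0) +
        ∫ s in (0 : ℝ)..v, ((if u ≤ s then (1 : ℝ) else 0) - (if u ≤ 0 then (1 : ℝ) else 0)) :=
  knight_identity_general τ u v
end

section
/- Uniqueness of the normalizing rotation up to signs: with Σ_F positive definite and Σ_Λ positive semidefinite such that Σ_F^{1/2} Σ_Λ Σ_F^{1/2} has r distinct eigenvalues, if H₁ and H₂ both satisfy Hᵀ Σ_F H = I_r and H^{-1} Σ_Λ (Hᵀ)^{-1} diagonal with strictly decreasing diagonal entries, then H₂ = H₁ S for some diagonal matrix S with diagonal entries in {+1, −1}. -/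
open Matrix

lemma le_apply_of_strictMono {n : ℕ} {f : Fin n → Fin n} (hf : StrictMono f) :
    ∀ i, i ≤ f i := by
  have key : ∀ k : ℕ, ∀ i : Fin n, i.val ≤ k → i ≤ f i := by
    intro k
    induction k with
    | zero =>
      intro i hi
      rw [Fin.le_def]
      omega
    | succ k ih =>
      intro i hi
      rcases Nat.lt_or_ge i.val (k + 1) with h | h
      · exact ih i (by omega)
      · have hik : i.val = k + 1 := le_antisymm hi h
        have hj : k < n := by omega
        have hji : (⟨k, hj⟩ : Fin n) < i := by simp [Fin.lt_def]; omega
        have h1 : (⟨k, hj⟩ : Fin n) ≤ f ⟨k, hj⟩ := ih _ (by simp)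
        have h2 : f ⟨k, hj⟩ < f i := hf hji
        rw [Fin.le_def] at h1 ⊢
        rw [Fin.lt_def] at h2
        simp only [Fin.val_mk] at h1 hji
        omega
  exact fun i => key i.val i le_rfl

lemma strictMono_fin_id {n : ℕ} {f : Fin n → Fin n} (hf : StrictMono f) : f = id := by
  have hg : StrictMono (fun i : Fin n => (f i.rev).rev) := by
    intro a b hab
    exact Fin.rev_lt_rev.mpr (hf (Fin.rev_lt_rev.mpr hab))
  funext j
  refine le_antisymm ?_ (le_apply_of_strictMono hf j)
  have h2 := le_apply_of_strictMono hg j.rev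
  simp only [Fin.rev_rev] at h2
  exact Fin.rev_le_rev.mp h2


/-- Uniqueness of the normalizing rotation up to signs: if H₁ and H₂ both satisfy
HᵀΣ_FH = I_r and H⁻¹Σ_Λ(Hᵀ)⁻¹ diagonal with strictly decreasing diagonal entries
(Σ_F positive definite, Σ_Λ positive semidefinite), then H₂ = H₁·S for a diagonal
matrix S with ±1 diagonal entries.  (SF = Σ_F, SL = Σ_Λ.) -/
theorem normalizing_rotation_unique_up_to_sign (r : ℕ)
    (SF SL : Matrix (Fin r) (Fin r) ℝ)
    (hSF : SF.PosDef) (hSL : SL.PosSemidef)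
    (H₁ H₂ : Matrix (Fin r) (Fin r) ℝ)
    (hH₁ : IsUnit H₁.det) (hH₂ : IsUnit H₂.det)
    (d₁ d₂ : Fin r → ℝ) (hd₁ : StrictAnti d₁) (hd₂ : StrictAnti d₂)
    (hnorm₁ : H₁.transpose * SF * H₁ = 1)
    (hdiag₁ : H₁⁻¹ * SL * (H₁.transpose)⁻¹ = Matrix.diagonal d₁)
    (hnorm₂ : H₂.transpose * SF * H₂ = 1)
    (hdiag₂ : H₂⁻¹ * SL * (H₂.transpose)⁻¹ = Matrix.diagonal d₂) :
    ∃ s : Fin r → ℝ, (∀ j, s j = 1 ∨ s j = -1) ∧ H₂ = H₁ * Matrix.diagonal s := by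
  have hH₁t : IsUnit H₁ᵀ.det := by rwa [Matrix.det_transpose]
  have hH₂t : IsUnit H₂ᵀ.det := by rwa [Matrix.det_transpose]
  set Q : Matrix (Fin r) (Fin r) ℝ := H₁⁻¹ * H₂ with hQdef
  -- SF in terms of H₁
  have hSFeq : SF = (H₁ᵀ)⁻¹ * H₁⁻¹ := by
    have := congrArg (fun M => (H₁ᵀ)⁻¹ * M * H₁⁻¹) hnorm₁
    simpa [Matrix.mul_assoc, Matrix.nonsing_inv_mul_cancel_left _ _ hH₁t,
      Matrix.mul_nonsing_inv _ hH₁, Matrix.nonsing_inv_mul _ hH₁t] using this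
  -- Q is orthogonal
  have hQorth : Qᵀ * Q = 1 := by
    have : Qᵀ * Q = H₂ᵀ * ((H₁ᵀ)⁻¹ * H₁⁻¹) * H₂ := by
      rw [hQdef, Matrix.transpose_mul, Matrix.transpose_nonsing_inv]
      rw [Matrix.mul_assoc, Matrix.mul_assoc, Matrix.mul_assoc]
    rw [this, ← hSFeq, hnorm₂]
  have hQQt : Q * Qᵀ = 1 := mul_eq_one_comm.mp hQorth
  -- SL in terms of H's
  have hSL₁ : SL = H₁ * (Matrix.diagonal d₁ * H₁ᵀ) := by
    have := congrArg (fun M => H₁ * M * H₁ᵀ) hdiag₁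
    simpa [Matrix.mul_assoc, Matrix.mul_nonsing_inv_cancel_left _ _ hH₁,
      Matrix.nonsing_inv_mul_cancel_right _ _ hH₁t] using this
  have hSL₂ : SL = H₂ * (Matrix.diagonal d₂ * H₂ᵀ) := by
    have := congrArg (fun M => H₂ * M * H₂ᵀ) hdiag₂
    simpa [Matrix.mul_assoc, Matrix.mul_nonsing_inv_cancel_left _ _ hH₂,
      Matrix.nonsing_inv_mul_cancel_right _ _ hH₂t] using this
  -- intertwining: diagonal d₁ * Q = Q * diagonal d₂
  have hint : Matrix.diagonal d₁ * Q = Q * Matrix.diagonal d₂ := by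
    have h := hSL₁.symm.trans hSL₂
    have h2 := congrArg (fun M => H₁⁻¹ * M * (H₁ᵀ)⁻¹) h
    simp only [Matrix.mul_assoc, Matrix.nonsing_inv_mul_cancel_left _ _ hH₁] at h2
    rw [Matrix.mul_nonsing_inv _ hH₁t, Matrix.mul_one] at h2
    have h3 := congrArg (fun M => M * (H₁⁻¹ * H₂)) h2
    simp only [Matrix.mul_assoc] at h3 ⊢
    have hkey : H₂ᵀ * (H₁ᵀ⁻¹ * (H₁⁻¹ * H₂)) = 1 := by
      rw [← Matrix.mul_assoc, ← Matrix.transpose_nonsing_inv, ← Matrix.transpose_mul,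
        ← hQdef]
      exact hQorth
    rw [hkey, Matrix.mul_one] at h3
    rw [hQdef]
    exact h3.trans (Matrix.mul_assoc _ _ _).symm
  -- entrywise
  have hentry : ∀ i j, d₁ i * Q i j = Q i j * d₂ j := by
    intro i j
    have := congrFun (congrFun hint i) j
    simpa [Matrix.diagonal_mul, Matrix.mul_diagonal] using this
  have hQdet : IsUnit Q.det := by
    rw [hQdef, Matrix.det_mul]
    exact (H₁.isUnit_nonsing_inv_det hH₁).mul hH₂
  -- each column has a nonzero entry
  have hcol : ∀ j, ∃ i, Q i j ≠ 0 := by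
    intro j
    by_contra h
    push_neg at h
    exact hQdet.ne_zero (Matrix.det_eq_zero_of_column_eq_zero j h)
  -- define f
  have hex : ∀ j, ∃ i, d₁ i = d₂ j := by
    intro j
    obtain ⟨i, hi⟩ := hcol j
    refine ⟨i, ?_⟩
    have := hentry i j
    by_contra hne
    exact hi (by
      have : (d₁ i - d₂ j) * Q i j = 0 := by ring_nf; linarith [hentry i j]
      rcases mul_eq_zero.mp this with h' | h'
      · exact absurd (by linarith : d₁ i = d₂ j) hne
      · exact h')
  choose f hf using hex
  have hfmono : StrictMono f := by
    intro a b hab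
    have : d₁ (f b) < d₁ (f a) := by rw [hf a, hf b]; exact hd₂ hab
    by_contra h
    push_neg at h
    rcases lt_or_eq_of_le h with h' | h'
    · exact absurd (hd₁ h') (by linarith)
    · rw [h'] at this; linarith
  have hfid : f = id := strictMono_fin_id hfmono
  have hd : ∀ j, d₂ j = d₁ j := by
    intro j
    have := hf j
    rw [hfid] at this
    exact this.symm
  -- Q is diagonal
  have hQzero : ∀ i j, i ≠ j → Q i j = 0 := by
    intro i j hij
    have h1 := hentry i j
    rw [hd j] at h1
    have hne : d₁ i ≠ d₁ j := fun h => hij (hd₁.injective h)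
    have : (d₁ i - d₁ j) * Q i j = 0 := by linarith [h1]
    rcases mul_eq_zero.mp this with h' | h'
    · exact absurd (by linarith : d₁ i = d₁ j) hne
    · exact h'
  refine ⟨fun i => Q i i, ?_, ?_⟩
  · intro j
    have hQdiag : Q = Matrix.diagonal (fun i => Q i i) := by
      ext i k
      by_cases h : i = k
      · subst h; simp [Matrix.diagonal_apply_eq]
      · rw [Matrix.diagonal_apply_ne _ h]; exact hQzero i k h
    have := congrFun (congrFun hQorth j) j
    rw [hQdiag] at this
    simp [Matrix.diagonal_transpose, Matrix.diagonal_mul_diagonal,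
      Matrix.diagonal_apply_eq, Matrix.one_apply_eq] at this
    exact mul_self_eq_one_iff.mp this
  · have hQdiag : Q = Matrix.diagonal (fun i => Q i i) := by
      ext i k
      by_cases h : i = k
      · subst h; simp [Matrix.diagonal_apply_eq]
      · rw [Matrix.diagonal_apply_ne _ h]; exact hQzero i k h
    rw [← hQdiag, hQdef, Matrix.mul_nonsing_inv_cancel_left _ _ hH₁]
end
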